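/- Let A ∈ 𝐔_m and let α, β ⊆ {1,…,m} be saturated index sets for A (i.e., ∑_{i,j∈α} a_{ij} = |α| and similarly for β). Then α ∪ β is a saturated index set for A, and if α ∩ β ≠ ∅, then α ∩ β is also a saturated index set for A. -/

import Mathlib

open Matrix Finset

def IsInU {m : ℕ} (A : Matrix (Fin m) (Fin m) ℝ) : Prop :=
  A.IsSymm ∧ (∀ i j, 0 ≤ A i j) ∧
    ∀ α : Finset (Fin m), ∑ i ∈ α, ∑ j ∈ α, A i j ≤ (α.card : ℝ)

def IsInUtop {m : ℕ} (A : Matrix (Fin m) (Fin m) ℝ) : Prop :=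
  IsInU A ∧ ∑ i, ∑ j, A i j = (m : ℝ)

def IsExtremeIn {m : ℕ} (S : Matrix (Fin m) (Fin m) ℝ → Prop)
    (A : Matrix (Fin m) (Fin m) ℝ) : Prop :=
  S A ∧ ∀ A₁ A₂, S A₁ → S A₂ → A₁ + A₂ = (2 : ℝ) • A → A₁ = A ∧ A₂ = A

def IsRowStochastic {m : ℕ} (X : Matrix (Fin m) (Fin m) ℝ) : Prop :=
  (∀ i j, 0 ≤ X i j) ∧ ∀ i, ∑ j, X i j = 1

def IsSubstochastic {m : ℕ} (X : Matrix (Fin m) (Fin m) ℝ) : Prop :=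
  (∀ i j, 0 ≤ X i j) ∧ ∀ i, ∑ j, X i j ≤ 1

/-!
The block sum `s ↦ ∑_{i,j ∈ s} a_{ij}` of a nonnegative matrix is supermodular: the squares
`α × α` and `β × β` overlap exactly in `(α ∩ β) × (α ∩ β)` and both lie in `(α ∪ β) × (α ∪ β)`.
The cardinality is modular, so if the block sum is bounded by the cardinality and attains it on
`α` and `β`, the two bounds on `α ∪ β` and `α ∩ β` must both be equalities.
-/

theorem sum_sum_add_sum_sum_le_union_add_inter {ι R : Type*} [DecidableEq ι]
    [AddCommMonoid R] [PartialOrder R] [IsOrderedAddMonoid R]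
    (a : ι → ι → R) (ha : ∀ i j, 0 ≤ a i j) (s t : Finset ι) :
    ∑ i ∈ s, ∑ j ∈ s, a i j + ∑ i ∈ t, ∑ j ∈ t, a i j ≤
      ∑ i ∈ s ∪ t, ∑ j ∈ s ∪ t, a i j + ∑ i ∈ s ∩ t, ∑ j ∈ s ∩ t, a i j := by
  simp only [← sum_product']
  have squares_inter : s ×ˢ s ∩ t ×ˢ t = (s ∩ t) ×ˢ (s ∩ t) := product_inter_product
  have squares_union_subset : s ×ˢ s ∪ t ×ˢ t ⊆ (s ∪ t) ×ˢ (s ∪ t) :=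
    union_subset (product_subset_product subset_union_left subset_union_left)
      (product_subset_product subset_union_right subset_union_right)
  rw [← sum_union_inter, squares_inter]
  exact add_le_add_left
    (sum_le_sum_of_subset_of_nonneg squares_union_subset fun p _ _ => ha p.1 p.2) _

theorem stmt_5 {m : ℕ} (A : Matrix (Fin m) (Fin m) ℝ) (hA : IsInU A)
    (α β : Finset (Fin m))
    (hα : ∑ i ∈ α, ∑ j ∈ α, A i j = (α.card : ℝ))
    (hβ : ∑ i ∈ β, ∑ j ∈ β, A i j = (β.card : ℝ)) :
    (∑ i ∈ α ∪ β, ∑ j ∈ α ∪ β, A i j = ((α ∪ β).card : ℝ)) ∧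
      ((α ∩ β).Nonempty →
        ∑ i ∈ α ∩ β, ∑ j ∈ α ∩ β, A i j = ((α ∩ β).card : ℝ)) := by
  obtain ⟨-, hnonneg, hle⟩ := hA
  have supermodular := sum_sum_add_sum_sum_le_union_add_inter A hnonneg α β
  have card_modular : ((α ∪ β).card : ℝ) + (α ∩ β).card = α.card + β.card := by
    exact_mod_cast card_union_add_card_inter α β
  have union_le := hle (α ∪ β)
  have inter_le := hle (α ∩ β)
  exact ⟨by linarith, fun _ => by linarith⟩
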